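/- Let a > 0, c ∈ ℂ \ {0}, f ∈ C²(ℝ), g ∈ C¹(ℝ), and set G(t) := ∫₀^t g(s) ds. Define u : ℝ × ℝ → ℂ by the d'Alembert formula u(x,t) := (1/2)[f(x−at) + f(x+at)] + (1/(2a))[G(x+at) − G(x−at)]. If there exists a sequence (σ_k) of real numbers with |σ_k| → +∞ such that f(·+σ_k) → c·f(·) and G(·+σ_k) → c·G(·) uniformly on compact subsets of ℝ, then u((x,t) + (σ_k, 0)) → c·u(x,t) uniformly on compact subsets of ℝ²; i.e. u is uniformly Poisson c-stable on ℝ² with the sequence τ_k = (σ_k, 0). -/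
import Mathlib


open MeasureTheory intervalIntegral Filter Topology

/-- The d'Alembert solution of the wave equation `u_tt = a² u_xx`, with
`G(t) = ∫₀^t g(s) ds`:
`u(x,t) = (1/2)[f(x−at) + f(x+at)] + (1/(2a))[G(x+at) − G(x−at)]`. -/
noncomputable def dAlembert (a : ℝ) (f g : ℝ → ℂ) (x t : ℝ) : ℂ :=
  (1 / 2) * (f (x - a * t) + f (x + a * t)) +
    (1 / (2 * a)) * ((∫ s in (0 : ℝ)..(x + a * t), g s) - ∫ s in (0 : ℝ)..(x - a * t), g s)

/-- If `f(·+σ_k) → c·f(·)` and `G(·+σ_k) → c·G(·)` uniformly on compacts of `ℝ`, where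
`G(t) = ∫₀^t g`, then the d'Alembert solution satisfies
`u((x,t) + (σ_k,0)) → c·u(x,t)` uniformly on compact subsets of `ℝ²`; i.e. `u` is
uniformly Poisson `c`-stable with the sequence `τ_k = (σ_k, 0)`. -/
theorem stmt16 (a : ℝ) (ha : 0 < a) (c : ℂ) (hc : c ≠ 0)
    (f g : ℝ → ℂ) (hf : ContDiff ℝ 2 f) (hg : ContDiff ℝ 1 g)
    (σ : ℕ → ℝ) (hσ : Tendsto (fun k => |σ k|) atTop atTop)
    (hrecf : ∀ K : Set ℝ, IsCompact K →
      TendstoUniformlyOn (fun k x => f (x + σ k)) (fun x => c * f x) atTop K)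
    (hrecG : ∀ K : Set ℝ, IsCompact K →
      TendstoUniformlyOn (fun k x => ∫ s in (0 : ℝ)..(x + σ k), g s)
        (fun x => c * ∫ s in (0 : ℝ)..x, g s) atTop K) :
    ∀ K : Set (ℝ × ℝ), IsCompact K →
      TendstoUniformlyOn (fun k (p : ℝ × ℝ) => dAlembert a f g (p.1 + σ k) p.2)
        (fun p => c * dAlembert a f g p.1 p.2) atTop K := by
  intro K hK
  set φm : ℝ × ℝ → ℝ := fun p => p.1 - a * p.2 with hφm
  set φp : ℝ × ℝ → ℝ := fun p => p.1 + a * p.2 with hφp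
  have hcm : Continuous φm := by fun_prop
  have hcp : Continuous φp := by fun_prop
  set L : Set ℝ := φm '' K ∪ φp '' K with hL
  have hLc : IsCompact L := (hK.image hcm).union (hK.image hcp)
  have hsubm : K ⊆ φm ⁻¹' L := fun p hp => Or.inl ⟨p, hp, rfl⟩
  have hsubp : K ⊆ φp ⁻¹' L := fun p hp => Or.inr ⟨p, hp, rfl⟩
  have h1 := (((hrecf L hLc).comp φm).mono hsubm)
  have h2 := (((hrecf L hLc).comp φp).mono hsubp)
  have h3 := (((hrecG L hLc).comp φp).mono hsubp)
  have h4 := (((hrecG L hLc).comp φm).mono hsubm)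
  have humul : ∀ z : ℂ, UniformContinuous (fun w : ℂ => z * w) := fun z =>
    (ContinuousLinearMap.mul ℂ ℂ z).uniformContinuous
  have hsum := (((humul (1 / 2)).comp_tendstoUniformlyOn (h1.add h2)).add
    ((humul (1 / (2 * a))).comp_tendstoUniformlyOn (h3.sub h4)))
  refine (hsum.congr ?_).congr_right ?_
  · filter_upwards with k p hp
    simp only [Pi.add_apply, Pi.sub_apply, Function.comp_apply]
    have e1 : p.1 - a * p.2 + σ k = p.1 + σ k - a * p.2 := by ring
    have e2 : p.1 + a * p.2 + σ k = p.1 + σ k + a * p.2 := by ring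
    rw [e1, e2, dAlembert]
  · intro p hp
    simp only [Pi.add_apply, Pi.sub_apply, Function.comp_apply, dAlembert]
    ring
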